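/- Let X be a finite nonempty set, let τ > 0, and let Z and Z' be neighboring finite multisets of vectors z : X → ℝ with |Z| ≥ 3 and |Z'| ≥ 3. Then for every x ∈ X, α(Z, x) ≤ softmax_τ(med(Z))(x) / softmax_τ(med(Z'))(x) ≤ β(Z, x). -/

import Mathlib

open Real

/-- The left-median of a finite multiset of reals (see context):
    for sorted values `s_1 ≤ … ≤ s_N`, this is `s_k` when `N = 2k` or `N = 2k+1` (`N ≥ 2`),
    and `s_1` when `N = 1`. (0-indexed: `N/2 - 1`.) -/
noncomputable def leftmed (S : Multiset ℝ) : ℝ :=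
  if S.card = 1 then (S.sort (· ≤ ·)).getD 0 0
  else (S.sort (· ≤ ·)).getD (S.card / 2 - 1) 0

/-- The right-median: `s_{k+1}` when `N = 2k`, `s_{k+2}` when `N = 2k+1 ≥ 3`, `s_1` when `N = 1`. -/
noncomputable def rightmed (S : Multiset ℝ) : ℝ :=
  if S.card = 1 then (S.sort (· ≤ ·)).getD 0 0
  else if S.card % 2 = 0 then (S.sort (· ≤ ·)).getD (S.card / 2) 0
  else (S.sort (· ≤ ·)).getD (S.card / 2 + 1) 0

/-- The median: `(s_k + s_{k+1})/2` when `N = 2k`, `s_{k+1}` when `N = 2k+1`. -/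
noncomputable def med (S : Multiset ℝ) : ℝ :=
  if S.card = 1 then (S.sort (· ≤ ·)).getD 0 0
  else if S.card % 2 = 0 then
    ((S.sort (· ≤ ·)).getD (S.card / 2 - 1) 0 + (S.sort (· ≤ ·)).getD (S.card / 2) 0) / 2
  else (S.sort (· ≤ ·)).getD (S.card / 2) 0
/-- Two finite multisets are neighbors if one is obtained from the other by adding a single
    element (equivalently their symmetric difference has size 1). -/
def Neighbors {α : Type*} (Z Z' : Multiset α) : Prop :=
  (∃ a, Z' = a ::ₘ Z) ∨ (∃ a, Z = a ::ₘ Z')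

/-- The multiset `Z^{(x)}` of `x`-th components of a multiset of vectors. -/
def compAt {X : Type*} (Z : Multiset (X → ℝ)) (x : X) : Multiset ℝ :=
  Z.map (fun z => z x)

/-- Componentwise left-median of a multiset of vectors. -/
noncomputable def leftmedVec {X : Type*} (Z : Multiset (X → ℝ)) : X → ℝ :=
  fun x => leftmed (compAt Z x)

/-- Componentwise median of a multiset of vectors. -/
noncomputable def medVec {X : Type*} (Z : Multiset (X → ℝ)) : X → ℝ :=
  fun x => med (compAt Z x)

/-- Componentwise right-median of a multiset of vectors. -/
noncomputable def rightmedVec {X : Type*} (Z : Multiset (X → ℝ)) : X → ℝ :=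
  fun x => rightmed (compAt Z x)
/-- `softmax_τ(z)(x) = exp(z_x/τ) / Σ_y exp(z_y/τ)`. -/
noncomputable def softmax {X : Type*} [Fintype X] (τ : ℝ) (z : X → ℝ) (x : X) : ℝ :=
  Real.exp (z x / τ) / ∑ y, Real.exp (z y / τ)
/-- `α(Z, x) = exp((z̄_x − z̄^R_x)/τ) · (Σ_y exp(z̄^L_y/τ)) / (Σ_y exp(z̄_y/τ))`
    where `z̄ = med(Z)`, `z̄^L = leftmed(Z)`, `z̄^R = rightmed(Z)`. -/
noncomputable def alpha {X : Type*} [Fintype X] (τ : ℝ) (Z : Multiset (X → ℝ)) (x : X) : ℝ :=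
  Real.exp ((medVec Z x - rightmedVec Z x) / τ) *
    (∑ y, Real.exp (leftmedVec Z y / τ)) / (∑ y, Real.exp (medVec Z y / τ))

/-- `β(Z, x) = exp((z̄_x − z̄^L_x)/τ) · (Σ_y exp(z̄^R_y/τ)) / (Σ_y exp(z̄_y/τ))`. -/
noncomputable def beta {X : Type*} [Fintype X] (τ : ℝ) (Z : Multiset (X → ℝ)) (x : X) : ℝ :=
  Real.exp ((medVec Z x - leftmedVec Z x) / τ) *
    (∑ y, Real.exp (rightmedVec Z y / τ)) / (∑ y, Real.exp (medVec Z y / τ))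

/-- Per-token privacy cost `γ(Z, x) = max(log(1/α(Z, x)), log β(Z, x))`. -/
noncomputable def gamma {X : Type*} [Fintype X] (τ : ℝ) (Z : Multiset (X → ℝ)) (x : X) : ℝ :=
  max (Real.log (1 / alpha τ Z x)) (Real.log (beta τ Z x))

/-! Inserting one element into a sorted list interleaves the two lists: `t i ≤ s i ≤ t (i + 1)`.
Hence adding or removing one vector keeps every coordinate of the median of `Z'` between the
left and right medians of `Z`. Writing the softmax ratio as
`exp ((z̄ x - med Z' x) / τ) * (∑ y, exp (med Z' y / τ)) / ∑ y, exp (z̄ y / τ)`, both factors that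
involve `med Z'` are monotone in it, so replacing `med Z'` by those bounds gives `α` and `β`. -/

namespace List

variable {α : Type*} [LinearOrder α] {l : List α}

theorem Pairwise.getD_le_getD (hl : l.Pairwise (· ≤ ·)) (d : α) {i j : ℕ} (hij : i ≤ j)
    (hj : j < l.length) : l.getD i d ≤ l.getD j d := by
  rw [getD_eq_getElem _ _ (hij.trans_lt hj), getD_eq_getElem _ _ hj]
  exact hl.rel_get_of_le (a := ⟨i, hij.trans_lt hj⟩) (b := ⟨j, hj⟩) hij

theorem Pairwise.getD_orderedInsert_le (hl : l.Pairwise (· ≤ ·)) (a d : α) {i : ℕ}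
    (hi : i < l.length) : (l.orderedInsert (· ≤ ·) a).getD i d ≤ l.getD i d := by
  induction l generalizing i with
  | nil => simp at hi
  | cons b l ih =>
    by_cases hab : a ≤ b
    · rw [orderedInsert_cons_of_le _ _ hab]
      rcases i with _ | i
      · simpa using hab
      · exact hl.getD_le_getD d i.le_succ hi
    · rw [orderedInsert_of_not_le _ _ hab]
      rcases i with _ | i
      · simp
      · exact ih hl.of_cons (by simpa using hi)

theorem Pairwise.getD_le_getD_orderedInsert_succ (hl : l.Pairwise (· ≤ ·)) (a d : α) {i : ℕ}
    (hi : i < l.length) : l.getD i d ≤ (l.orderedInsert (· ≤ ·) a).getD (i + 1) d := by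
  induction l generalizing i with
  | nil => simp at hi
  | cons b l ih =>
    by_cases hab : a ≤ b
    · simp [orderedInsert_cons_of_le _ _ hab]
    · have hins := hl.orderedInsert a
      rw [orderedInsert_of_not_le _ _ hab] at hins ⊢
      rcases i with _ | i
      · exact hins.getD_le_getD d (Nat.zero_le 1) (by simp [orderedInsert_length])
      · exact ih hl.of_cons (by simpa using hi)

end List

theorem Multiset.sort_cons_eq_orderedInsert {α : Type*} [LinearOrder α] (a : α)
    (s : Multiset α) :
    (a ::ₘ s).sort (· ≤ ·) = (s.sort (· ≤ ·)).orderedInsert (· ≤ ·) a :=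
  Quot.inductionOn s fun l => by simp [List.mergeSort_eq_insertionSort]

open Multiset Set

/-- The `i`-th smallest element of `S`, counting from `0`; it is `0` once `i ≥ card S`. -/
noncomputable def orderStat (S : Multiset ℝ) (i : ℕ) : ℝ :=
  (S.sort (· ≤ ·)).getD i 0

section OrderStat

variable {S : Multiset ℝ} {i j : ℕ}

theorem orderStat_mono (hij : i ≤ j) (hj : j < card S) : orderStat S i ≤ orderStat S j :=
  (pairwise_sort S _).getD_le_getD 0 hij (by rwa [length_sort])

theorem orderStat_cons_le (a : ℝ) (hi : i < card S) :
    orderStat (a ::ₘ S) i ≤ orderStat S i := by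
  unfold orderStat
  rw [sort_cons_eq_orderedInsert]
  exact (pairwise_sort S _).getD_orderedInsert_le a 0 (by rwa [length_sort])

theorem orderStat_le_orderStat_cons_succ (a : ℝ) (hi : i < card S) :
    orderStat S i ≤ orderStat (a ::ₘ S) (i + 1) := by
  unfold orderStat
  rw [sort_cons_eq_orderedInsert]
  exact (pairwise_sort S _).getD_le_getD_orderedInsert_succ a 0 (by rwa [length_sort])

theorem leftmed_eq_orderStat (hS : 2 ≤ card S) : leftmed S = orderStat S (card S / 2 - 1) := by
  rw [leftmed, if_neg (by omega), orderStat]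

theorem rightmed_eq_orderStat (hS : 2 ≤ card S) :
    rightmed S = orderStat S ((card S + 1) / 2) := by
  rw [rightmed, if_neg (by omega), orderStat]
  split_ifs <;> congr 1 <;> omega

theorem med_mem_Icc (hS : S ≠ 0) :
    med S ∈ Icc (orderStat S ((card S - 1) / 2)) (orderStat S (card S / 2)) := by
  have hpos : 0 < card S := card_pos.mpr hS
  rw [med]
  split_ifs with h1 h2
  · simp [h1, orderStat]
  · have hle : orderStat S (card S / 2 - 1) ≤ orderStat S (card S / 2) :=
      orderStat_mono (Nat.sub_le _ 1) (by omega)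
    rw [show (card S - 1) / 2 = card S / 2 - 1 by omega]
    unfold orderStat at hle ⊢
    constructor <;> linarith
  · rw [show (card S - 1) / 2 = card S / 2 by omega]
    exact ⟨le_rfl, le_rfl⟩

end OrderStat

theorem med_cons_mem_Icc_leftmed_rightmed {S : Multiset ℝ} (a : ℝ) (hS : 2 ≤ card S) :
    med (a ::ₘ S) ∈ Icc (leftmed S) (rightmed S) := by
  have hmed := med_mem_Icc (S := a ::ₘ S) cons_ne_zero
  rw [card_cons, Nat.add_sub_cancel] at hmed
  rw [leftmed_eq_orderStat hS, rightmed_eq_orderStat hS]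
  constructor
  · calc orderStat S (card S / 2 - 1)
        ≤ orderStat (a ::ₘ S) (card S / 2 - 1 + 1) :=
          orderStat_le_orderStat_cons_succ a (by omega)
      _ = orderStat (a ::ₘ S) (card S / 2) := by congr 1; omega
      _ ≤ med (a ::ₘ S) := hmed.1
  · exact hmed.2.trans (orderStat_cons_le a (by omega))

theorem med_mem_Icc_leftmed_cons_rightmed_cons {S : Multiset ℝ} (a : ℝ) (hS : 2 ≤ card S) :
    med S ∈ Icc (leftmed (a ::ₘ S)) (rightmed (a ::ₘ S)) := by
  have hmed := med_mem_Icc (S := S) (by rintro rfl; simp at hS)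
  have hcard : 2 ≤ card (a ::ₘ S) := by rw [card_cons]; omega
  rw [leftmed_eq_orderStat hcard, rightmed_eq_orderStat hcard, card_cons]
  constructor
  · calc orderStat (a ::ₘ S) ((card S + 1) / 2 - 1)
        = orderStat (a ::ₘ S) ((card S - 1) / 2) := by congr 1; omega
      _ ≤ orderStat S ((card S - 1) / 2) := orderStat_cons_le a (by omega)
      _ ≤ med S := hmed.1
  · calc med S ≤ orderStat S (card S / 2) := hmed.2
      _ ≤ orderStat (a ::ₘ S) (card S / 2 + 1) := orderStat_le_orderStat_cons_succ a (by omega)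
      _ = orderStat (a ::ₘ S) ((card S + 1 + 1) / 2) := by congr 1; omega

theorem medVec_mem_Icc_of_neighbors {X : Type*} {Z Z' : Multiset (X → ℝ)}
    (h : Neighbors Z Z') (hZ : 2 ≤ card Z) (hZ' : 2 ≤ card Z') (x : X) :
    medVec Z' x ∈ Icc (leftmedVec Z x) (rightmedVec Z x) := by
  rcases h with ⟨a, rfl⟩ | ⟨a, rfl⟩ <;>
    simp only [medVec, leftmedVec, rightmedVec, compAt, map_cons]
  · exact med_cons_mem_Icc_leftmed_rightmed (a x) (by rwa [card_map])
  · exact med_mem_Icc_leftmed_cons_rightmed_cons (a x) (by rwa [card_map])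

section Softmax

variable {X : Type*} [Fintype X] {τ : ℝ}

theorem softmax_div_softmax (z w : X → ℝ) (x : X) :
    softmax τ z x / softmax τ w x =
      exp ((z x - w x) / τ) * (∑ y, exp (w y / τ)) / ∑ y, exp (z y / τ) := by
  rw [softmax, softmax, div_div_div_eq, sub_div, exp_sub]
  ring

theorem softmax_div_softmax_mem_Icc (hτ : 0 ≤ τ) {z l w r : X → ℝ} (hlw : l ≤ w)
    (hwr : w ≤ r) (x : X) :
    softmax τ z x / softmax τ w x ∈
      Icc (exp ((z x - r x) / τ) * (∑ y, exp (l y / τ)) / ∑ y, exp (z y / τ))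
        (exp ((z x - l x) / τ) * (∑ y, exp (r y / τ)) / ∑ y, exp (z y / τ)) := by
  rw [softmax_div_softmax]
  constructor
  · gcongr with y
    exacts [hwr x, hlw y]
  · gcongr with y
    exacts [hlw x, hwr y]

end Softmax

theorem alpha_le_softmax_med_ratio_le_beta_general
    {X : Type*} [Fintype X] (τ : ℝ) (hτ : 0 < τ)
    (Z Z' : Multiset (X → ℝ)) (hZZ' : Neighbors Z Z')
    (hZ : 3 ≤ Z.card) (hZ' : 3 ≤ Z'.card) :
    ∀ x : X,
      alpha τ Z x ≤ softmax τ (medVec Z) x / softmax τ (medVec Z') x ∧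
      softmax τ (medVec Z) x / softmax τ (medVec Z') x ≤ beta τ Z x := by
  intro x
  have hmed := medVec_mem_Icc_of_neighbors hZZ' (by omega) (by omega)
  exact softmax_div_softmax_mem_Icc hτ.le (fun y => (hmed y).1) (fun y => (hmed y).2) x

/-- For neighboring finite multisets `Z, Z'` of vectors in `ℝ^X` with
    `|Z| ≥ 3` and `|Z'| ≥ 3`: for every `x ∈ X`,
    `α(Z, x) ≤ softmax_τ(med(Z))(x) / softmax_τ(med(Z'))(x) ≤ β(Z, x)`. -/
theorem alpha_le_softmax_med_ratio_le_beta
    {X : Type*} [Fintype X] [Nonempty X] (τ : ℝ) (hτ : 0 < τ)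
    (Z Z' : Multiset (X → ℝ)) (hZZ' : Neighbors Z Z')
    (hZ : 3 ≤ Z.card) (hZ' : 3 ≤ Z'.card) :
    ∀ x : X,
      alpha τ Z x ≤ softmax τ (medVec Z) x / softmax τ (medVec Z') x ∧
      softmax τ (medVec Z) x / softmax τ (medVec Z') x ≤ beta τ Z x :=
  alpha_le_softmax_med_ratio_le_beta_general τ hτ Z Z' hZZ' hZ hZ'
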